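/- (Airy example, algebraic core) Using the Fourier transform normalization F(u)(ξ) = ∫ e^{-ixξ}u(x) dx and the Airy function with F(Ai)(ξ) = e^{iξ³/3}, the free Schrödinger evolution at time t = 1 of ψ₀(x) = e^{-ix²/2} Ai(x) on ℝ is, up to an explicit unimodular constant, the smooth nonvanishing function ψ(1,x) = c · e^{i(x³/3 + x²/2)}. Equivalently: F(e^{-ix²/2} Ai(x))(ξ) multiplied by e^{-iξ²/2} and inverse-Fourier-transformed gives c · e^{i(x³/3 + x²/2)}. -/

import Mathlib

open Complex Real Filter

/-!
Expanding the square, `(x - y)² / 2 - y² / 2 = x² / 2 - x y`: the chirp `e^{-iy²/2}` of `ψ₀`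
cancels the quadratic part of the free kernel `e^{i(x-y)²/2}` in `y`. Hence the Schrödinger
integral at time `1` is `e^{ix²/2}` times the Fourier integral of `Ai` at `ξ = x`, which tends
to `e^{ix³/3}`. The modulus of the limit is `|2πi|^{-1/2} = (2π)^{-1/2}`.
-/

theorem exp_schrodinger_kernel_mul_exp_chirp (x y : ℂ) :
    cexp (I * (x - y) ^ 2 / 2) * cexp (-I * y ^ 2 / 2) =
      cexp (I * x ^ 2 / 2) * cexp (-I * y * x) := by
  rw [← Complex.exp_add, ← Complex.exp_add]
  ring_nf

theorem intervalIntegral_schrodinger_kernel_mul_chirp (c : ℂ) (f : ℝ → ℂ) (x a b : ℝ) :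
    ∫ y in a..b, c * cexp (I * ((x : ℂ) - y) ^ 2 / 2) * (cexp (-I * (y : ℂ) ^ 2 / 2) * f y) =
      c * cexp (I * (x : ℂ) ^ 2 / 2) * ∫ y in a..b, cexp (-I * (y : ℂ) * x) * f y := by
  rw [← intervalIntegral.integral_const_mul]
  refine intervalIntegral.integral_congr fun y _ => ?_
  calc c * cexp (I * ((x : ℂ) - y) ^ 2 / 2) * (cexp (-I * (y : ℂ) ^ 2 / 2) * f y)
      = c * (cexp (I * ((x : ℂ) - y) ^ 2 / 2) * cexp (-I * (y : ℂ) ^ 2 / 2)) * f y := by ring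
    _ = c * cexp (I * (x : ℂ) ^ 2 / 2) * (cexp (-I * (y : ℂ) * x) * f y) := by
      rw [exp_schrodinger_kernel_mul_exp_chirp]
      ring

theorem tendsto_schrodinger_integral_chirp_mul {f : ℝ → ℂ} {x : ℝ} {L : ℂ} (c : ℂ)
    (hf : Tendsto (fun R : ℝ => ∫ y in (-R)..R, cexp (-I * (y : ℂ) * x) * f y) atTop
      (nhds L)) :
    Tendsto (fun R : ℝ => ∫ y in (-R)..R,
        c * cexp (I * ((x : ℂ) - y) ^ 2 / 2) * (cexp (-I * (y : ℂ) ^ 2 / 2) * f y)) atTop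
      (nhds (c * cexp (I * (x : ℂ) ^ 2 / 2) * L)) := by
  simpa only [intervalIntegral_schrodinger_kernel_mul_chirp] using
    hf.const_mul (c * cexp (I * (x : ℂ) ^ 2 / 2))

theorem norm_two_pi_I_cpow_neg_half :
    ‖(2 * (π : ℂ) * I) ^ (-(1 : ℂ) / 2)‖ = (2 * π) ^ (-(1 : ℝ) / 2) := by
  have h : (-(1 : ℂ) / 2) = ((-(1 : ℝ) / 2 : ℝ) : ℂ) := by push_cast; ring
  rw [h, norm_cpow_real, norm_mul, norm_I, mul_one, norm_mul, Complex.norm_ofNat, norm_real,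
    Real.norm_of_nonneg pi_nonneg]

/-- Airy example: with the convention `F(u)(ξ) = ∫ e^{-ixξ} u(x) dx` and the Airy function
characterized by `F(Ai)(ξ) = e^{iξ³/3}` (as an improper Riemann integral), the free
Schrödinger evolution at time `t = 1` (given by convolution with the free kernel
`(2πi)^{-1/2} e^{i(x-y)²/2}`, as an improper Riemann integral) of
`ψ₀(x) = e^{-ix²/2} Ai(x)` is `c e^{i(x³/3 + x²/2)}` with `c = (2πi)^{-1/2}`; in
particular its modulus is the constant `(2π)^{-1/2}`, so `ψ(1,·)` is smooth and
nowhere vanishing. -/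
theorem airy_example (Ai : ℝ → ℂ)
    (hAi : ∀ ξ : ℝ, Tendsto (fun R : ℝ => ∫ y in (-R : ℝ)..R,
        Complex.exp (-Complex.I * (y : ℂ) * (ξ : ℂ)) * Ai y) atTop
      (nhds (Complex.exp (Complex.I * (ξ : ℂ) ^ 3 / 3)))) :
    ∀ x : ℝ,
      Tendsto (fun R : ℝ => ∫ y in (-R : ℝ)..R,
          (2 * (π : ℂ) * Complex.I) ^ (-(1 : ℂ) / 2) *
            Complex.exp (Complex.I * ((x : ℂ) - (y : ℂ)) ^ 2 / 2) *
            (Complex.exp (-Complex.I * (y : ℂ) ^ 2 / 2) * Ai y)) atTop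
        (nhds ((2 * (π : ℂ) * Complex.I) ^ (-(1 : ℂ) / 2) *
          Complex.exp (Complex.I * ((x : ℂ) ^ 3 / 3 + (x : ℂ) ^ 2 / 2)))) ∧
      ‖(2 * (π : ℂ) * Complex.I) ^ (-(1 : ℂ) / 2) *
          Complex.exp (Complex.I * ((x : ℂ) ^ 3 / 3 + (x : ℂ) ^ 2 / 2))‖ =
        (2 * π) ^ (-(1 : ℝ) / 2) := by
  intro x
  refine ⟨?_, ?_⟩
  · convert tendsto_schrodinger_integral_chirp_mul
      ((2 * (π : ℂ) * I) ^ (-(1 : ℂ) / 2)) (hAi x) using 2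
    rw [mul_assoc _ (cexp _), ← Complex.exp_add]
    ring_nf
  · have h : (x : ℂ) ^ 3 / 3 + (x : ℂ) ^ 2 / 2 = ((x ^ 3 / 3 + x ^ 2 / 2 : ℝ) : ℂ) := by
      push_cast; ring
    rw [norm_mul, norm_two_pi_I_cpow_neg_half, h, norm_exp_I_mul_ofReal, mul_one]
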